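/- arXiv:2011.01111 — 5 statements merged into one kernel-verified Lean document; each statement's English description precedes it below -/
import Mathlib

section
/- Let D₁,…,D_m ∈ ℝ^{q×q}, and let X ∈ ℝ^{q×q} satisfy D_iX = Xᵀ D_i for all i. If γ ∈ ℂ is an eigenvalue of X with eigenvector z ∈ ℂ^q, then (γ − γ̄)·(zᴴ D_i z) = 0 for every i. Consequently, if min_{‖z‖=1} Σ_i |zᴴ D_i z|² > 0, then all eigenvalues of X are real. -/
/-!
With `A` the complexification of `X` and `B` that of `Dᵢ`, the hypothesis becomes `B A = Aᴴ B`.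
Evaluating `zᴴ (B A) z` with `A z = γ z` gives `γ · zᴴ B z`, while evaluating `zᴴ (Aᴴ B) z`
with `zᴴ Aᴴ = (A z)ᴴ = γ̄ zᴴ` gives `γ̄ · zᴴ B z`. If `γ` were not real, every `zᴴ Dᵢ z` would
vanish, and so would the sum at the normalisation of `z`.
-/

open Matrix

section
variable {R n : Type*} [CommRing R] [StarRing R] [Fintype n]

theorem sub_star_mul_star_dotProduct_mulVec_eq_zero {A B : Matrix n n R} (hBA : B * A = Aᴴ * B)
    {γ : R} {z : n → R} (hz : A *ᵥ z = γ • z) :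
    (γ - star γ) * (star z ⬝ᵥ (B *ᵥ z)) = 0 := by
  have hleft : star z ⬝ᵥ ((B * A) *ᵥ z) = γ * (star z ⬝ᵥ (B *ᵥ z)) := by
    rw [← mulVec_mulVec, hz, mulVec_smul, dotProduct_smul, smul_eq_mul]
  have hright : star z ⬝ᵥ ((Aᴴ * B) *ᵥ z) = star γ * (star z ⬝ᵥ (B *ᵥ z)) := by
    rw [← mulVec_mulVec, dotProduct_mulVec, ← star_mulVec, hz, star_smul, smul_dotProduct,
      smul_eq_mul]
  rw [hBA, hright] at hleft
  linear_combination -hleft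

theorem star_smul_dotProduct_mulVec_smul (B : Matrix n n R) (c : R) (z : n → R) :
    star (c • z) ⬝ᵥ (B *ᵥ (c • z)) = star c * c * (star z ⬝ᵥ (B *ᵥ z)) := by
  rw [star_smul, mulVec_smul, smul_dotProduct, dotProduct_smul, smul_eq_mul, smul_eq_mul,
    mul_assoc]
end

open scoped ComplexOrder in
theorem exists_star_smul_dotProduct_smul_eq_one {𝕜 n : Type*} [RCLike 𝕜] [Fintype n]
    {z : n → 𝕜} (hz : z ≠ 0) : ∃ c : 𝕜, star (c • z) ⬝ᵥ (c • z) = 1 := by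
  obtain ⟨s, hs, hzs⟩ := RCLike.pos_iff_exists_ofReal.1 (dotProduct_star_self_pos_iff.2 hz)
  refine ⟨((√s)⁻¹ : ℝ), ?_⟩
  rw [star_smul, smul_dotProduct, dotProduct_smul, ← hzs]
  simp only [smul_eq_mul, RCLike.star_def, RCLike.conj_ofReal, ← RCLike.ofReal_mul]
  rw [← mul_assoc, ← mul_inv, Real.mul_self_sqrt hs.le, inv_mul_cancel₀ hs.ne', RCLike.ofReal_one]

theorem map_ofReal_conjTranspose {n : Type*} (X : Matrix n n ℝ) :
    (X.map Complex.ofReal)ᴴ = Xᵀ.map Complex.ofReal := by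
  rw [← conjTranspose_map _ (fun x => by simp), conjTranspose_eq_transpose_of_trivial]

theorem map_ofReal_mul_eq_conjTranspose_mul {n : Type*} [Fintype n] {A X : Matrix n n ℝ}
    (h : A * X = Xᵀ * A) :
    A.map Complex.ofReal * X.map Complex.ofReal =
      (X.map Complex.ofReal)ᴴ * A.map Complex.ofReal := by
  rw [map_ofReal_conjTranspose]
  exact (Matrix.map_mul (f := Complex.ofRealHom)).symm.trans
    ((congr_arg (·.map Complex.ofRealHom) h).trans Matrix.map_mul)

theorem stmt3 {m q : ℕ} (D : Fin m → Matrix (Fin q) (Fin q) ℝ)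
    (X : Matrix (Fin q) (Fin q) ℝ)
    (hX : ∀ i, D i * X = Xᵀ * D i)
    (γ : ℂ) (z : Fin q → ℂ) (hz : z ≠ 0)
    (heig : (X.map Complex.ofReal) *ᵥ z = γ • z) :
    (∀ i, (γ - (starRingEnd ℂ) γ) * (star z ⬝ᵥ ((D i).map Complex.ofReal *ᵥ z)) = 0) ∧
    ((∀ w : Fin q → ℂ, star w ⬝ᵥ w = 1 →
        0 < ∑ i, ‖star w ⬝ᵥ ((D i).map Complex.ofReal *ᵥ w)‖ ^ 2) →
      γ.im = 0) := by
  have hsub_mul i := sub_star_mul_star_dotProduct_mulVec_eq_zero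
    (map_ofReal_mul_eq_conjTranspose_mul (hX i)) heig
  refine ⟨hsub_mul, fun hpos => ?_⟩
  by_contra hγ
  have hform i : star z ⬝ᵥ ((D i).map Complex.ofReal *ᵥ z) = 0 :=
    (mul_eq_zero.1 (hsub_mul i)).resolve_left
      (sub_ne_zero.2 fun h => hγ (Complex.conj_eq_iff_im.1 h.symm))
  obtain ⟨c, hc⟩ := exists_star_smul_dotProduct_smul_eq_one hz
  simpa only [star_smul_dotProduct_mulVec_smul, hform, mul_zero, norm_zero, ne_eq,
    OfNat.ofNat_ne_zero, not_false_eq_true, zero_pow, Finset.sum_const_zero, lt_self_iff_false]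
    using hpos (c • z) hc
end

section
/- Let t₁, t₂, t₃ be the roots (with multiplicity, each root of multiplicity at most two) of t³ + p t + q = 0 with p, q real. Then for every ε, each root t̃ of the perturbed equation t³ + (p+ε)t + q = 0 satisfies min_i |t̃ − t_i| = O(√|ε|) as ε → 0. More precisely, there exists a constant K (depending on p, q) such that for small |ε|, min_i |t̃ − t_i| ≤ K√|ε|. -/
/-! Subtracting the two equations, a root `t̃` of the perturbed cubic satisfies
`(t̃ - t₁)(t̃ - t₂)(t̃ - t₃) = -ε t̃`, and `t̃` is bounded in terms of `p`, `q`. Since the roots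
are not all equal, some pair of them is at distance `δ > 0`; `t̃` is at distance at least `δ / 2`
from one root of that pair, so the product of its distances to the other two roots is
`O(|ε| / δ)`, and the smaller of these two distances is `O(√|ε|)`. -/

lemma le_sqrt_or_le_sqrt_of_mul_le {b c M : ℝ} (hb : 0 ≤ b) (hc : 0 ≤ c) (h : b * c ≤ M) :
    b ≤ √M ∨ c ≤ √M := by
  by_contra! hlt
  have hM : √M * √M = M := Real.mul_self_sqrt ((mul_nonneg hb hc).trans h)
  nlinarith [mul_lt_mul'' hlt.1 hlt.2 (Real.sqrt_nonneg M) (Real.sqrt_nonneg M)]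

lemma half_le_dist_or_half_le_dist {α : Type*} [PseudoMetricSpace α] (x y z : α) :
    dist y z / 2 ≤ dist x y ∨ dist y z / 2 ≤ dist x z := by
  by_contra! hlt
  linarith [dist_triangle y x z, dist_comm x y]

lemma mul_le_div_of_half_le_of_mul_mul_le {a b c δ M : ℝ} (hδ : 0 < δ) (ha : δ / 2 ≤ a)
    (hb : 0 ≤ b) (hc : 0 ≤ c) (h : a * b * c ≤ M) : b * c ≤ 2 * M / δ := by
  rw [le_div_iff₀ hδ]
  nlinarith [mul_le_mul_of_nonneg_right ha (mul_nonneg hb hc)]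

lemma dist_le_sqrt_of_dist_mul_dist_mul_dist_le {α : Type*} [PseudoMetricSpace α]
    {x y z w : α} {δ M : ℝ} (hδ : 0 < δ) (hyz : δ ≤ dist y z)
    (h : dist x y * dist x z * dist x w ≤ M) :
    dist x y ≤ √(2 * M / δ) ∨ dist x z ≤ √(2 * M / δ) ∨ dist x w ≤ √(2 * M / δ) := by
  rcases half_le_dist_or_half_le_dist x y z with hy | hz
  · exact Or.inr <| le_sqrt_or_le_sqrt_of_mul_le dist_nonneg dist_nonneg <|
      mul_le_div_of_half_le_of_mul_mul_le hδ (by linarith) dist_nonneg dist_nonneg h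
  · rw [mul_comm (dist x y)] at h
    have := le_sqrt_or_le_sqrt_of_mul_le dist_nonneg dist_nonneg <|
      mul_le_div_of_half_le_of_mul_mul_le hδ (by linarith) dist_nonneg dist_nonneg h
    tauto

lemma norm_le_of_cube_add_mul_add_eq_zero {𝕜 : Type*} [NormedDivisionRing 𝕜] {a b z : 𝕜}
    (hz : z ^ 3 + a * z + b = 0) : ‖z‖ ≤ 1 + ‖a‖ + ‖b‖ := by
  have hcube : ‖z‖ ^ 3 ≤ ‖a‖ * ‖z‖ + ‖b‖ := by
    rw [← norm_pow, ← norm_mul, eq_neg_of_add_eq_zero_left ((add_assoc _ _ _).symm.trans hz),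
      norm_neg]
    exact norm_add_le _ _
  by_contra! hlt
  have hz0 : 1 < ‖z‖ := by linarith [norm_nonneg a, norm_nonneg b]
  have hsq : ‖a‖ + ‖b‖ < ‖z‖ ^ 2 := by nlinarith
  nlinarith [norm_nonneg b, mul_lt_mul_of_pos_left hsq (zero_lt_one.trans hz0)]

theorem stmt12 (p q : ℝ) (t₁ t₂ t₃ : ℂ)
    (hfact : ∀ t : ℂ, t ^ 3 + (p : ℂ) * t + (q : ℂ) = (t - t₁) * (t - t₂) * (t - t₃))
    (hmult : ¬(t₁ = t₂ ∧ t₁ = t₃)) :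
    ∃ K > (0 : ℝ), ∃ ε₀ > (0 : ℝ), ∀ ε : ℝ, |ε| < ε₀ →
      ∀ tt : ℂ, tt ^ 3 + ((p : ℂ) + (ε : ℂ)) * tt + (q : ℂ) = 0 →
        ‖tt - t₁‖ ≤ K * Real.sqrt |ε| ∨
        ‖tt - t₂‖ ≤ K * Real.sqrt |ε| ∨
        ‖tt - t₃‖ ≤ K * Real.sqrt |ε| := by
  set δ := max (dist t₁ t₂) (dist t₁ t₃)
  have hδ : 0 < δ := by
    rw [lt_max_iff, dist_pos, dist_pos]
    tauto
  set B := 2 + |p| + |q|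
  refine ⟨√(2 * B / δ), by positivity, 1, one_pos, fun ε hε tt htt => ?_⟩
  have hbound : ‖tt‖ ≤ B := by
    refine (norm_le_of_cube_add_mul_add_eq_zero htt).trans ?_
    have := norm_add_le (p : ℂ) (ε : ℂ)
    simp only [Complex.norm_real, Real.norm_eq_abs] at this ⊢
    linarith
  have hprod : dist tt t₁ * dist tt t₂ * dist tt t₃ ≤ |ε| * B := by
    have : (tt - t₁) * (tt - t₂) * (tt - t₃) = -(ε : ℂ) * tt := by
      rw [← hfact tt]
      linear_combination htt
    rw [dist_eq_norm, dist_eq_norm, dist_eq_norm, ← norm_mul, ← norm_mul, this, norm_mul,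
      norm_neg, Complex.norm_real, Real.norm_eq_abs]
    exact mul_le_mul_of_nonneg_left hbound (abs_nonneg ε)
  have hK : √(2 * (|ε| * B) / δ) = √(2 * B / δ) * √|ε| := by
    rw [← Real.sqrt_mul (by positivity), mul_left_comm, mul_div_assoc, mul_div_assoc, mul_comm]
  simp only [← dist_eq_norm, ← hK]
  rcases le_max_iff.mp (le_refl δ) with h | h
  · exact dist_le_sqrt_of_dist_mul_dist_mul_dist_le hδ h hprod
  · rw [mul_right_comm] at hprod
    have := dist_le_sqrt_of_dist_mul_dist_mul_dist_le hδ h hprod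
    tauto
end

section
/- Let Z ∈ ℝ^{q×q} be nonsingular and let X = Z^{-ᵀ} diag(√(q₂/q₁) I_{q₁}, −√(q₁/q₂) I_{q₂}) Zᵀ with q₁+q₂=q, q₁,q₂ ≥ 1. Then tr(X)=0, tr(X²)=q, and for any family {D_i} of q×q matrices admitting the factorization D_i = Z Φ_i Zᵀ with each Φ_i block diagonal conformally with (q₁,q₂), one has D_i X = Xᵀ D_i for all i. -/
/-!
`X` is the similarity transform `(Zᵀ)⁻¹ A Zᵀ` of the symmetric matrix `A = diag(s I, -t I)` with
`s = √(q₂/q₁)`, `t = √(q₁/q₂)`, so its traces are those of `A`: `q₁ s - q₂ t = √q₁√q₂ - √q₂√q₁ = 0`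
and `q₁ s² + q₂ t² = q₂ + q₁`. Since `Zᵀ (Zᵀ)⁻¹ = 1`, both `Dᵢ X` and `Xᵀ Dᵢ` collapse to
`Z Φᵢ A Zᵀ = Z A Φᵢ Zᵀ`, and `Φᵢ` commutes with `A` because `A` is scalar on each diagonal block.
-/

open Matrix

namespace Matrix

section BlockScalar

variable {l m R : Type*} [DecidableEq l] [DecidableEq m]

theorem trace_fromBlocks_smul_one [Fintype l] [Fintype m] [CommRing R] (a b : R) :
    trace (fromBlocks (a • 1 : Matrix l l R) 0 0 (b • 1 : Matrix m m R)) =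
      Fintype.card l * a + Fintype.card m * b := by
  simp [trace, Fintype.sum_sum_type]

theorem fromBlocks_smul_one_mul_self [Fintype l] [Fintype m] [CommRing R] (a b : R) :
    fromBlocks (a • 1 : Matrix l l R) 0 0 (b • 1 : Matrix m m R) *
        fromBlocks (a • 1) 0 0 (b • 1) =
      fromBlocks ((a * a) • 1) 0 0 ((b * b) • 1) := by
  simp [fromBlocks_multiply, smul_smul]

theorem transpose_fromBlocks_smul_one [CommRing R] (a b : R) :
    (fromBlocks (a • 1 : Matrix l l R) 0 0 (b • 1 : Matrix m m R))ᵀ =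
      fromBlocks (a • 1) 0 0 (b • 1) := by
  simp [fromBlocks_transpose]

theorem commute_fromBlocks_fromBlocks_smul_one [Fintype l] [Fintype m] [CommRing R]
    (P : Matrix l l R) (Q : Matrix m m R) (a b : R) :
    Commute (fromBlocks P 0 0 Q) (fromBlocks (a • 1) 0 0 (b • 1)) := by
  simp [Commute, SemiconjBy, fromBlocks_multiply]

end BlockScalar

section Conjugation

variable {n R : Type*} [Fintype n] [DecidableEq n] [CommRing R]

theorem inv_mul_mul_mul_self {P : Matrix n n R} (hP : IsUnit P) (A : Matrix n n R) :
    P⁻¹ * A * P * (P⁻¹ * A * P) = P⁻¹ * (A * A) * P := by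
  simp only [Matrix.mul_assoc, mul_nonsing_inv_cancel_left _ _ ((isUnit_iff_isUnit_det P).mp hP)]

theorem mul_transpose_mul_conj_eq {Z A Φ : Matrix n n R} (hZ : IsUnit Z.det) (hA : Aᵀ = A)
    (hΦA : Commute Φ A) :
    Z * Φ * Zᵀ * (Zᵀ⁻¹ * A * Zᵀ) = (Zᵀ⁻¹ * A * Zᵀ)ᵀ * (Z * Φ * Zᵀ) := by
  have hZT : IsUnit Zᵀ.det := by rwa [det_transpose]
  simp only [transpose_mul, transpose_transpose, hA, transpose_nonsing_inv, Matrix.mul_assoc,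
    mul_nonsing_inv_cancel_left _ _ hZT, nonsing_inv_mul_cancel_left _ _ hZ]
  rw [← Matrix.mul_assoc Φ, hΦA.eq, Matrix.mul_assoc]

end Conjugation

end Matrix

theorem Real.mul_sqrt_div_self {p : ℝ} (hp : 0 ≤ p) (r : ℝ) : p * √(r / p) = √p * √r := by
  rw [Real.sqrt_div' r hp, mul_div_left_comm, Real.div_sqrt, mul_comm]

theorem stmt15 {m q₁ q₂ : ℕ} (hq₁ : 0 < q₁) (hq₂ : 0 < q₂)
    (Z : Matrix (Fin q₁ ⊕ Fin q₂) (Fin q₁ ⊕ Fin q₂) ℝ) (hZ : IsUnit Z.det)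
    (X : Matrix (Fin q₁ ⊕ Fin q₂) (Fin q₁ ⊕ Fin q₂) ℝ)
    (hX : X = (Z⁻¹)ᵀ *
        Matrix.fromBlocks (Real.sqrt ((q₂ : ℝ) / (q₁ : ℝ)) • (1 : Matrix (Fin q₁) (Fin q₁) ℝ)) 0 0
          (-(Real.sqrt ((q₁ : ℝ) / (q₂ : ℝ))) • (1 : Matrix (Fin q₂) (Fin q₂) ℝ)) * Zᵀ)
    (D : Fin m → Matrix (Fin q₁ ⊕ Fin q₂) (Fin q₁ ⊕ Fin q₂) ℝ)
    (Φa : Fin m → Matrix (Fin q₁) (Fin q₁) ℝ) (Φb : Fin m → Matrix (Fin q₂) (Fin q₂) ℝ)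
    (hD : ∀ i, D i = Z * Matrix.fromBlocks (Φa i) 0 0 (Φb i) * Zᵀ) :
    X.trace = 0 ∧ (X * X).trace = ((q₁ : ℝ) + (q₂ : ℝ)) ∧
    ∀ i, D i * X = Xᵀ * D i := by
  have hq₁' : (0 : ℝ) < q₁ := Nat.cast_pos.mpr hq₁
  have hq₂' : (0 : ℝ) < q₂ := Nat.cast_pos.mpr hq₂
  have hZT : IsUnit Zᵀ := (isUnit_iff_isUnit_det _).mpr (by rwa [det_transpose])
  rw [transpose_nonsing_inv] at hX
  refine ⟨?_, ?_, fun i => ?_⟩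
  · rw [hX, trace_conj' hZT, trace_fromBlocks_smul_one]
    simp only [Fintype.card_fin, mul_neg, Real.mul_sqrt_div_self hq₁'.le,
      Real.mul_sqrt_div_self hq₂'.le]
    ring
  · rw [hX, inv_mul_mul_mul_self hZT, trace_conj' hZT, fromBlocks_smul_one_mul_self,
      trace_fromBlocks_smul_one, neg_mul_neg, Real.mul_self_sqrt (by positivity),
      Real.mul_self_sqrt (by positivity)]
    simp only [Fintype.card_fin]
    field_simp
    ring
  · rw [hD i, hX]
    exact mul_transpose_mul_conj_eq hZ (transpose_fromBlocks_smul_one _ _)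
      (commute_fromBlocks_fromBlocks_smul_one _ _ _ _)
end

section
/- Let B₁,…,B_m ∈ ℝ^{p×p} admit B_i = Z Σ_i Zᵀ = Ẑ Σ̂_i Ẑᵀ where Z, Ẑ are nonsingular, Σ_i are τ_p-block diagonal and Σ̂_i are τ̂_p-block diagonal. Set Y = ZᵀẐ^{-ᵀ} and Γ = Y diag(γ₁I_{p̂₁},…,γ_ℓ̂I_{p̂_ℓ̂}) Y^{-1} for distinct reals γ_j. Then Σ_iΓ = ΓᵀΣ_i for every i = 1,…,m. -/
/-! Both factorizations give `Σ̂ᵢ = Yᵀ Σᵢ Y`. A diagonal matrix that is constant on the blocks of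
`τ̂_p` commutes with the `τ̂_p`-block diagonal `Σ̂ᵢ`, and conjugating this commutation back by `Y`
turns it into `Σᵢ Γ = Γᵀ Σᵢ`. -/

open Matrix

namespace Matrix

variable {n R : Type*} [Fintype n] [DecidableEq n]

theorem commute_diagonal_of_apply_eq_zero [CommSemiring R] {β : Type*} (b : n → β) (d : β → R)
    (M : Matrix n n R) (hM : ∀ x y, b x ≠ b y → M x y = 0) :
    Commute (diagonal fun x => d (b x)) M := by
  ext x y
  rw [diagonal_mul, mul_diagonal]
  by_cases h : b x = b y
  · rw [h, mul_comm]
  · simp only [hM x y h, mul_zero, zero_mul]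

variable [CommRing R]

theorem eq_transpose_mul_mul_of_mul_mul_transpose_eq {Z Zh S Sh : Matrix n n R}
    (hZh : IsUnit Zh.det) (h : Z * S * Zᵀ = Zh * Sh * Zhᵀ) :
    Sh = (Zᵀ * (Zh⁻¹)ᵀ)ᵀ * S * (Zᵀ * (Zh⁻¹)ᵀ) := by
  have hZhT : IsUnit Zhᵀ.det := by rwa [det_transpose]
  calc Sh = Zh⁻¹ * (Zh * Sh * Zhᵀ) * (Zhᵀ)⁻¹ := by
        simp only [Matrix.mul_assoc, mul_nonsing_inv _ hZhT, mul_one,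
          nonsing_inv_mul_cancel_left _ _ hZh]
    _ = (Zᵀ * (Zh⁻¹)ᵀ)ᵀ * S * (Zᵀ * (Zh⁻¹)ᵀ) := by
        rw [← h, transpose_mul, transpose_transpose, transpose_transpose, transpose_nonsing_inv]
        simp only [Matrix.mul_assoc]

theorem mul_conj_eq_transpose_conj_mul {S Y D : Matrix n n R} (hY : IsUnit Y.det)
    (hD : Dᵀ = D) (hcomm : Commute D (Yᵀ * S * Y)) :
    S * (Y * D * Y⁻¹) = (Y * D * Y⁻¹)ᵀ * S := by
  have hYT : IsUnit Yᵀ.det := by rwa [det_transpose]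
  have hS : S = (Yᵀ)⁻¹ * (Yᵀ * S * Y) * Y⁻¹ := by
    simp only [Matrix.mul_assoc, mul_nonsing_inv _ hY, mul_one,
      nonsing_inv_mul_cancel_left _ _ hYT]
  rw [transpose_mul, transpose_mul, hD, transpose_nonsing_inv, hS]
  calc (Yᵀ)⁻¹ * (Yᵀ * S * Y) * Y⁻¹ * (Y * D * Y⁻¹)
      = (Yᵀ)⁻¹ * ((Yᵀ * S * Y) * D) * Y⁻¹ := by
        simp only [Matrix.mul_assoc, nonsing_inv_mul_cancel_left _ _ hY]
    _ = (Yᵀ)⁻¹ * (D * (Yᵀ * S * Y)) * Y⁻¹ := by rw [hcomm.eq]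
    _ = (Yᵀ)⁻¹ * (D * Yᵀ) * ((Yᵀ)⁻¹ * (Yᵀ * S * Y) * Y⁻¹) := by
        simp only [Matrix.mul_assoc, mul_nonsing_inv_cancel_left _ _ hYT]

end Matrix

theorem stmt17_general {m ℓh : ℕ} (pv : Fin ℓh → ℕ)
    (B Sig Sigh : Fin m → Matrix ((j : Fin ℓh) × Fin (pv j)) ((j : Fin ℓh) × Fin (pv j)) ℝ)
    (Z Zh : Matrix ((j : Fin ℓh) × Fin (pv j)) ((j : Fin ℓh) × Fin (pv j)) ℝ)
    (hZ : IsUnit Z.det) (hZh : IsUnit Zh.det)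
    (hSighblk : ∀ i (x y : (j : Fin ℓh) × Fin (pv j)), x.1 ≠ y.1 → Sigh i x y = 0)
    (hB1 : ∀ i, B i = Z * Sig i * Zᵀ) (hB2 : ∀ i, B i = Zh * Sigh i * Zhᵀ)
    (γ : Fin ℓh → ℝ)
    (Y Γ : Matrix ((j : Fin ℓh) × Fin (pv j)) ((j : Fin ℓh) × Fin (pv j)) ℝ)
    (hY : Y = Zᵀ * (Zh⁻¹)ᵀ)
    (hΓ : Γ = Y * Matrix.diagonal (fun x => γ x.1) * Y⁻¹) :
    ∀ i, Sig i * Γ = Γᵀ * Sig i := by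
  intro i
  have hYdet : IsUnit Y.det := by
    rw [hY, det_mul, det_transpose, det_transpose, det_nonsing_inv]
    exact hZ.mul (isUnit_ringInverse.mpr hZh)
  have hSigh : Sigh i = Yᵀ * Sig i * Y :=
    hY ▸ eq_transpose_mul_mul_of_mul_mul_transpose_eq hZh ((hB1 i).symm.trans (hB2 i))
  rw [hΓ]
  refine mul_conj_eq_transpose_conj_mul hYdet (diagonal_transpose _) ?_
  rw [← hSigh]
  exact commute_diagonal_of_apply_eq_zero Sigma.fst γ (Sigh i) (hSighblk i)

theorem stmt17 {m ℓh ℓ₀ : ℕ} (pv : Fin ℓh → ℕ)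
    (B Sig Sigh : Fin m → Matrix ((j : Fin ℓh) × Fin (pv j)) ((j : Fin ℓh) × Fin (pv j)) ℝ)
    (Z Zh : Matrix ((j : Fin ℓh) × Fin (pv j)) ((j : Fin ℓh) × Fin (pv j)) ℝ)
    (hZ : IsUnit Z.det) (hZh : IsUnit Zh.det)
    (bτ : ((j : Fin ℓh) × Fin (pv j)) → Fin ℓ₀)
    (hSigblk : ∀ i x y, bτ x ≠ bτ y → Sig i x y = 0)
    (hSighblk : ∀ i (x y : (j : Fin ℓh) × Fin (pv j)), x.1 ≠ y.1 → Sigh i x y = 0)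
    (hB1 : ∀ i, B i = Z * Sig i * Zᵀ) (hB2 : ∀ i, B i = Zh * Sigh i * Zhᵀ)
    (γ : Fin ℓh → ℝ) (hγ : Function.Injective γ)
    (Y Γ : Matrix ((j : Fin ℓh) × Fin (pv j)) ((j : Fin ℓh) × Fin (pv j)) ℝ)
    (hY : Y = Zᵀ * (Zh⁻¹)ᵀ)
    (hΓ : Γ = Y * Matrix.diagonal (fun x => γ x.1) * Y⁻¹) :
    ∀ i, Sig i * Γ = Γᵀ * Sig i :=
  stmt17_general pv B Sig Sigh Z Zh hZ hZh hSighblk hB1 hB2 γ Y Γ hY hΓ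
end

section
/- Let D₁,…,D_m ∈ ℝ^{q×q}, X ∈ ℝ^{q×q}, γ an eigenvalue of X with unit eigenvector z ∈ ℂ^q, and μ = min_{‖w‖=1} (Σ_i |wᴴD_iw|²)^{1/2} > 0. Then |Im(γ)| ≤ (Σ_{i=1}^m ‖D_iX − XᵀD_i‖_F²)^{1/2} / (2μ). -/
open Matrix

/-- Frobenius norm of a real matrix. -/
noncomputable def frobNorm {a b : ℕ} (M : Matrix (Fin a) (Fin b) ℝ) : ℝ :=
  Real.sqrt (∑ i, ∑ j, (M i j) ^ 2)

/-!
For an eigenpair `X z = γ z` of a real matrix, `zᴴ Xᵀ = γ̄ zᴴ`, so the quadratic form of the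
commutator `D X - Xᵀ D` at `z` is `(γ - γ̄) · zᴴ D z = 2i Im γ · zᴴ D z`. Bounding the left side by
the Frobenius norm (Cauchy–Schwarz), squaring and summing over `i` gives
`(2 |Im γ|)² ∑ |zᴴ Dᵢ z|² ≤ ∑ ‖Dᵢ X - Xᵀ Dᵢ‖_F²`, while `∑ |zᴴ Dᵢ z|² ≥ μ²`.
-/

open ComplexConjugate

theorem norm_star_dotProduct_mulVec_le_frobNorm {a b : ℕ} (M : Matrix (Fin a) (Fin b) ℝ)
    (w : Fin a → ℂ) (z : Fin b → ℂ) :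
    ‖star w ⬝ᵥ (M.map Complex.ofReal *ᵥ z)‖
      ≤ frobNorm M * (√(∑ i, ‖w i‖ ^ 2) * √(∑ j, ‖z j‖ ^ 2)) := by
  have hM : ∑ p : Fin a × Fin b, |M p.1 p.2| ^ 2 = ∑ i, ∑ j, M i j ^ 2 := by
    simp only [Fintype.sum_prod_type, sq_abs]
  have hwz : ∑ p : Fin a × Fin b, (‖w p.1‖ * ‖z p.2‖) ^ 2
      = (∑ i, ‖w i‖ ^ 2) * ∑ j, ‖z j‖ ^ 2 := by
    simp only [Fintype.sum_prod_type, mul_pow, Finset.sum_mul_sum]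
  calc ‖star w ⬝ᵥ (M.map Complex.ofReal *ᵥ z)‖
      = ‖∑ i, ∑ j, star (w i) * (M i j * z j)‖ := by
        simp only [dotProduct, mulVec, map_apply, Pi.star_apply, Finset.mul_sum]
    _ ≤ ∑ i, ∑ j, |M i j| * (‖w i‖ * ‖z j‖) := by
        refine (norm_sum_le _ _).trans (Finset.sum_le_sum fun i _ ↦ ?_)
        refine (norm_sum_le _ _).trans_eq (Finset.sum_congr rfl fun j _ ↦ ?_)
        rw [norm_mul, norm_mul, norm_star, Complex.norm_real, Real.norm_eq_abs]
        ring
    _ = ∑ p : Fin a × Fin b, |M p.1 p.2| * (‖w p.1‖ * ‖z p.2‖) :=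
        (Fintype.sum_prod_type' _).symm
    _ ≤ √(∑ p : Fin a × Fin b, |M p.1 p.2| ^ 2) * √(∑ p : Fin a × Fin b, (‖w p.1‖ * ‖z p.2‖) ^ 2) :=
        Real.sum_mul_le_sqrt_mul_sqrt _ _ _
    _ = frobNorm M * (√(∑ i, ‖w i‖ ^ 2) * √(∑ j, ‖z j‖ ^ 2)) := by
        rw [hM, hwz, Real.sqrt_mul (by positivity), frobNorm]

theorem sum_norm_sq_eq_one_of_star_dotProduct_self {n : Type*} [Fintype n] {z : n → ℂ}
    (hz : star z ⬝ᵥ z = 1) : ∑ j, ‖z j‖ ^ 2 = 1 := by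
  have h : ((∑ j, ‖z j‖ ^ 2 : ℝ) : ℂ) = 1 := by
    rw [← hz]
    simp [dotProduct, Complex.conj_mul']
  exact_mod_cast h

theorem star_vecMul_transpose_map_ofReal {n : Type*} [Fintype n]
    {X : Matrix n n ℝ} {γ : ℂ} {z : n → ℂ} (heig : X.map Complex.ofReal *ᵥ z = γ • z) :
    star z ᵥ* (X.map Complex.ofReal)ᵀ = conj γ • star z := by
  have hreal : (X.map Complex.ofReal)ᴴ = (X.map Complex.ofReal)ᵀ := by
    ext i j
    simp
  rw [← hreal, ← star_mulVec, heig, star_smul]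
  rfl

theorem star_dotProduct_commutator_mulVec {n : Type*} [Fintype n]
    (D : Matrix n n ℝ) {X : Matrix n n ℝ} {γ : ℂ} {z : n → ℂ}
    (heig : X.map Complex.ofReal *ᵥ z = γ • z) :
    star z ⬝ᵥ ((D * X - Xᵀ * D).map Complex.ofReal *ᵥ z)
      = (γ - conj γ) * (star z ⬝ᵥ (D.map Complex.ofReal *ᵥ z)) := by
  have hmul (A B : Matrix n n ℝ) : (A * B).map Complex.ofReal
      = A.map Complex.ofReal * B.map Complex.ofReal :=
    Matrix.map_mul (f := Complex.ofRealHom)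
  rw [Matrix.map_sub _ Complex.ofReal_sub, hmul, hmul, transpose_map, sub_mulVec,
    dotProduct_sub, ← mulVec_mulVec, ← mulVec_mulVec, heig, mulVec_smul, dotProduct_smul,
    dotProduct_mulVec (star z) (X.map Complex.ofReal)ᵀ, star_vecMul_transpose_map_ofReal heig,
    smul_dotProduct, smul_eq_mul, smul_eq_mul, sub_mul]

theorem le_sqrt_sum_sq_div_of_forall_mul_le {ι : Type*} (s : Finset ι) {a μ : ℝ} {d c : ι → ℝ}
    (ha : 0 ≤ a) (hμ : 0 < μ) (hd : ∀ i ∈ s, 0 ≤ d i) (hμd : μ ≤ √(∑ i ∈ s, d i ^ 2))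
    (hdc : ∀ i ∈ s, a * d i ≤ c i) :
    a ≤ √(∑ i ∈ s, c i ^ 2) / μ := by
  rw [le_div_iff₀ hμ]
  calc a * μ ≤ a * √(∑ i ∈ s, d i ^ 2) := mul_le_mul_of_nonneg_left hμd ha
    _ = √(∑ i ∈ s, (a * d i) ^ 2) := by
        simp only [mul_pow]
        rw [← Finset.mul_sum, Real.sqrt_mul (sq_nonneg a), Real.sqrt_sq ha]
    _ ≤ √(∑ i ∈ s, c i ^ 2) := by
        gcongr with i hi
        · exact mul_nonneg ha (hd i hi)
        · exact hdc i hi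

theorem stmt19 {m q : ℕ} (D : Fin m → Matrix (Fin q) (Fin q) ℝ)
    (X : Matrix (Fin q) (Fin q) ℝ) (γ : ℂ) (z : Fin q → ℂ)
    (hz : star z ⬝ᵥ z = 1)
    (heig : (X.map Complex.ofReal) *ᵥ z = γ • z)
    (μ : ℝ) (hμ : 0 < μ)
    (hmin : ∀ w : Fin q → ℂ, star w ⬝ᵥ w = 1 →
      μ ≤ Real.sqrt (∑ i, ‖star w ⬝ᵥ ((D i).map Complex.ofReal *ᵥ w)‖ ^ 2)) :
    |γ.im| ≤ Real.sqrt (∑ i, frobNorm (D i * X - Xᵀ * D i) ^ 2) / (2 * μ) := by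
  have hnorm : ‖γ - conj γ‖ = 2 * |γ.im| := by
    rw [Complex.sub_conj, norm_mul, Complex.norm_I, mul_one, Complex.norm_real,
      Real.norm_eq_abs, abs_mul, abs_two]
  have hbound : ∀ i ∈ Finset.univ, 2 * |γ.im| * ‖star z ⬝ᵥ ((D i).map Complex.ofReal *ᵥ z)‖
      ≤ frobNorm (D i * X - Xᵀ * D i) := by
    intro i _
    have h := norm_star_dotProduct_mulVec_le_frobNorm (D i * X - Xᵀ * D i) z z
    rwa [star_dotProduct_commutator_mulVec (D i) heig, norm_mul, hnorm,
      sum_norm_sq_eq_one_of_star_dotProduct_self hz, Real.sqrt_one, mul_one, mul_one] at h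
  have h := le_sqrt_sum_sq_div_of_forall_mul_le _ (by positivity) hμ
    (fun i _ ↦ norm_nonneg _) (hmin z hz) hbound
  rw [mul_comm 2 μ, ← div_div]
  linarith
end
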